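/- arXiv:1906.08479 — 2 statements merged into one kernel-verified Lean document; each statement's English description precedes it below -/
import Mathlib

section
/- Let μ be a compactly supported probability measure on ℝ with λ_max = sup(supp μ), and let σ > 0 and β ≥ 0 satisfy βσ² < −s_*. Then inf_{γ > βλ_max} [ γσ² − ∫ μ(dλ) log(γ − βλ) ] = 1 + log σ² + ∫_0^{βσ²} R_μ(x) dx, and the infimum is attained at γ = β R_μ(βσ²) + 1/σ² (with the convention R_μ(0) interpreted by continuity when β = 0, where the minimizer is γ = 1/σ²). -/
/-! The objective `F(γ) = γσ² - ∫ log (γ - βλ) dμ(λ)` is convex, so it is minimal where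
`∫ (γ - βλ)⁻¹ dμ = σ²`; for `β > 0` this is `γ₀ = β z` with `S_μ(z) = -βσ²`, i.e.
`γ₀ = β R_μ(βσ²) + 1/σ²`. Up to `1 + log σ²`, the minimal value is
`Φ(x) = min_{w > λ_max} (x w - ∫ log (w - λ) dμ) - log x - 1` at `x = βσ²`. The minimum is
attained at `w = S_μ⁻¹(-x)`, which depends continuously on `x`, so by the envelope theorem
`Φ'(x) = S_μ⁻¹(-x) - 1/x = R_μ(x)`; and `Φ(x) → 0` as `x → 0⁺` since `R_μ` stays in the convex
hull of the support. Hence `Φ(βσ²) = ∫_0^{βσ²} R_μ`. -/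

open MeasureTheory Filter Topology

noncomputable section

/-- The supremum of the support of a (compactly supported) measure on `ℝ`:
`λ_max = sup(supp μ)`. -/
def suppMax (μ : Measure ℝ) : ℝ := sInf {r : ℝ | μ (Set.Ioi r) = 0}

/-- The Stieltjes transform `S_μ(z) = ∫ μ(dλ)/(λ − z)`. -/
def stieltjesT (μ : Measure ℝ) (z : ℝ) : ℝ := ∫ l, (l - z)⁻¹ ∂μ

/-- `s_* = lim_{z↓λ_max} S_μ(z) ∈ [−∞, 0)`, realized (using monotonicity of `S_μ`) as the
infimum of `S_μ` over `(λ_max, ∞)`, viewed in the extended reals. -/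
def sStarE (μ : Measure ℝ) : EReal :=
  ⨅ z ∈ Set.Ioi (suppMax μ), ((stieltjesT μ z : ℝ) : EReal)

/-- The `R`-transform `R_μ(z) = S_μ^{-1}(−z) − 1/z`, where `S_μ^{-1}` is the inverse of the
restriction of the Stieltjes transform to `(λ_max, ∞)`. -/
def Rtransform (μ : Measure ℝ) (z : ℝ) : ℝ :=
  Function.invFunOn (stieltjesT μ) (Set.Ioi (suppMax μ)) (-z) - 1 / z


open Set

theorem suppMax_eq_essSup (μ : Measure ℝ) : suppMax μ = essSup id μ := by
  simp only [suppMax, essSup, limsup_eq, ae_iff, not_le]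
  rfl

theorem exists_ae_mem_Icc_suppMax {μ : Measure ℝ} (hcomp : ∃ K : Set ℝ, IsCompact K ∧ μ Kᶜ = 0) :
    ∃ m, ∀ᵐ l ∂μ, l ∈ Icc m (suppMax μ) := by
  obtain ⟨K, hK, hKc⟩ := hcomp
  have hK_ae : ∀ᵐ l ∂μ, l ∈ K := ae_iff.2 hKc
  obtain ⟨m, hm⟩ := hK.bddBelow
  obtain ⟨M, hM⟩ := hK.bddAbove
  have hbdd : IsBoundedUnder (· ≤ ·) (ae μ) id :=
    isBoundedUnder_of_eventually_le (hK_ae.mono fun l hl => hM hl)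
  refine ⟨m, ?_⟩
  filter_upwards [hK_ae, ae_le_essSup hbdd] with l hlK hl
  exact ⟨hm hlK, (suppMax_eq_essSup μ).symm ▸ hl⟩

theorem le_of_ae_mem_Icc {μ : Measure ℝ} [NeZero μ] {m b : ℝ} (hμ : ∀ᵐ l ∂μ, l ∈ Icc m b) :
    m ≤ b :=
  let ⟨_, hl⟩ := hμ.exists
  hl.1.trans hl.2

section Integrals

variable {μ : Measure ℝ} {m b β γ : ℝ}

theorem integral_lt_integral_of_ae_lt {α : Type*} [MeasurableSpace α] {ν : Measure α} [NeZero ν]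
    {f g : α → ℝ} (hf : Integrable f ν) (hg : Integrable g ν) (h : ∀ᵐ x ∂ν, f x < g x) :
    ∫ x, f x ∂ν < ∫ x, g x ∂ν := by
  rw [← sub_pos, ← integral_sub hg hf, integral_pos_iff_support_of_nonneg_ae
    (h.mono fun x hx => (sub_pos.2 hx).le) (hg.sub hf), pos_iff_ne_zero]
  intro h0
  obtain ⟨x, hx, hlt⟩ := ((measure_eq_zero_iff_ae_notMem.1 h0).and h).exists
  exact hx (sub_pos.2 hlt).ne'

theorem sub_mul_pos_of_le (hβ : 0 ≤ β) (hγ : β * b < γ) {l : ℝ} (hl : l ≤ b) :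
    0 < γ - β * l := by
  linarith [mul_le_mul_of_nonneg_left hl hβ]

theorem integrable_of_continuousOn_Icc [IsFiniteMeasure μ] {f : ℝ → ℝ}
    (hμ : ∀ᵐ l ∂μ, l ∈ Icc m b) (hf : ContinuousOn f (Icc m b)) : Integrable f μ := by
  have h := hf.integrableOn_compact (μ := μ) isCompact_Icc
  rwa [IntegrableOn, Measure.restrict_eq_self_of_ae_mem hμ] at h

theorem integrable_inv_sub_mul [IsFiniteMeasure μ] (hμ : ∀ᵐ l ∂μ, l ∈ Icc m b) (hβ : 0 ≤ β)
    (hγ : β * b < γ) : Integrable (fun l => (γ - β * l)⁻¹) μ :=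
  integrable_of_continuousOn_Icc hμ <| (continuousOn_const.sub (continuousOn_const.mul
    continuousOn_id)).inv₀ fun _ hl => (sub_mul_pos_of_le hβ hγ hl.2).ne'

theorem integrable_log_sub_mul [IsFiniteMeasure μ] (hμ : ∀ᵐ l ∂μ, l ∈ Icc m b) (hβ : 0 ≤ β)
    (hγ : β * b < γ) : Integrable (fun l => Real.log (γ - β * l)) μ :=
  integrable_of_continuousOn_Icc hμ <| (continuousOn_const.sub (continuousOn_const.mul
    continuousOn_id)).log fun _ hl => (sub_mul_pos_of_le hβ hγ hl.2).ne'

theorem integrable_inv_sub [IsFiniteMeasure μ] (hμ : ∀ᵐ l ∂μ, l ∈ Icc m b) {z : ℝ} (hz : b < z) :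
    Integrable (fun l => (z - l)⁻¹) μ := by
  simpa using integrable_inv_sub_mul hμ zero_le_one (γ := z) (by simpa using hz)

theorem integrable_log_sub [IsFiniteMeasure μ] (hμ : ∀ᵐ l ∂μ, l ∈ Icc m b) {w : ℝ} (hw : b < w) :
    Integrable (fun l => Real.log (w - l)) μ := by
  simpa using integrable_log_sub_mul hμ zero_le_one (γ := w) (by simpa using hw)

/-- By the tangent-line bound `log u ≤ u - 1`, this convex function lies above its tangent at
`γ₀`, which is horizontal. -/
theorem isMinOn_mul_sub_integral_log [IsProbabilityMeasure μ] (hμ : ∀ᵐ l ∂μ, l ∈ Icc m b)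
    (hβ : 0 ≤ β) {γ₀ : ℝ} (hγ₀ : β * b < γ₀) :
    IsMinOn (fun γ => γ * ∫ l, (γ₀ - β * l)⁻¹ ∂μ - ∫ l, Real.log (γ - β * l) ∂μ)
      (Ioi (β * b)) γ₀ := by
  refine isMinOn_iff.2 fun γ (hγ : β * b < γ) => ?_
  have hpt : ∀ᵐ l ∂μ, Real.log (γ - β * l) - Real.log (γ₀ - β * l)
      ≤ (γ - γ₀) * (γ₀ - β * l)⁻¹ := by
    filter_upwards [hμ] with l hl
    have h₀ := sub_mul_pos_of_le hβ hγ₀ hl.2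
    have h := sub_mul_pos_of_le hβ hγ hl.2
    rw [← Real.log_div h.ne' h₀.ne']
    calc _ ≤ (γ - β * l) / (γ₀ - β * l) - 1 := Real.log_le_sub_one_of_pos (div_pos h h₀)
      _ = _ := by field_simp; ring
  have hint : ∫ l, (Real.log (γ - β * l) - Real.log (γ₀ - β * l)) ∂μ
      ≤ ∫ l, (γ - γ₀) * (γ₀ - β * l)⁻¹ ∂μ :=
    integral_mono_ae ((integrable_log_sub_mul hμ hβ hγ).sub (integrable_log_sub_mul hμ hβ hγ₀))
      ((integrable_inv_sub_mul hμ hβ hγ₀).const_mul _) hpt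
  rw [integral_sub (integrable_log_sub_mul hμ hβ hγ) (integrable_log_sub_mul hμ hβ hγ₀),
    integral_const_mul] at hint
  linarith

end Integrals

section Stieltjes

variable {μ : Measure ℝ} {m b : ℝ}

theorem stieltjesT_eq_neg_integral (μ : Measure ℝ) (z : ℝ) :
    stieltjesT μ z = -∫ l, (z - l)⁻¹ ∂μ := by
  rw [stieltjesT, ← integral_neg]
  simp_rw [← inv_neg, neg_sub]

theorem stieltjesT_mem_Icc [IsProbabilityMeasure μ] (hμ : ∀ᵐ l ∂μ, l ∈ Icc m b) {z : ℝ}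
    (hz : b < z) : stieltjesT μ z ∈ Icc (-(z - b)⁻¹) (-(z - m)⁻¹) := by
  have hint := integrable_inv_sub hμ hz
  rw [stieltjesT_eq_neg_integral, mem_Icc, neg_le_neg_iff, neg_le_neg_iff]
  constructor
  · have h := integral_mono_ae hint (integrable_const (z - b)⁻¹) <| by
      filter_upwards [hμ] with l hl
      exact inv_anti₀ (sub_pos.2 hz) (by linarith [hl.2])
    simpa using h
  · have h := integral_mono_ae (integrable_const (z - m)⁻¹) hint <| by
      filter_upwards [hμ] with l hl
      exact inv_anti₀ (by linarith [hl.2]) (by linarith [hl.1])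
    simpa using h

theorem stieltjesT_strictMonoOn [IsProbabilityMeasure μ] (hμ : ∀ᵐ l ∂μ, l ∈ Icc m b) :
    StrictMonoOn (stieltjesT μ) (Ioi b) := by
  intro z₁ (hz₁ : b < z₁) z₂ (hz₂ : b < z₂) h
  simp only [stieltjesT_eq_neg_integral, neg_lt_neg_iff]
  refine integral_lt_integral_of_ae_lt (integrable_inv_sub hμ hz₂) (integrable_inv_sub hμ hz₁) ?_
  filter_upwards [hμ] with l hl
  exact inv_strictAnti₀ (by linarith [hl.2]) (by linarith)

theorem stieltjesT_continuousOn [IsFiniteMeasure μ] (hb : ∀ᵐ l ∂μ, l ≤ b) :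
    ContinuousOn (stieltjesT μ) (Ioi b) := by
  intro z (hz : b < z)
  refine (continuousAt_of_dominated (bound := fun _ => ((z - b) / 2)⁻¹) ?_ ?_
    (integrable_const _) ?_).continuousWithinAt
  · exact Eventually.of_forall fun _ =>
      (measurable_id.sub measurable_const).inv.aestronglyMeasurable
  · filter_upwards [Ioi_mem_nhds (show (z + b) / 2 < z by linarith)] with z' (hz' : _ < z')
    filter_upwards [hb] with l hl
    rw [Real.norm_eq_abs, abs_inv, abs_sub_comm]
    exact inv_anti₀ (by linarith) (by rw [abs_of_pos (by linarith)]; linarith)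
  · filter_upwards [hb] with l hl
    exact (continuousAt_const.sub continuousAt_id).inv₀ (by simp; linarith)

end Stieltjes

section Inverse

def stieltjesRange (μ : Measure ℝ) : Set ℝ := {y | sStarE μ < y ∧ y < 0}

def stieltjesInv (μ : Measure ℝ) : ℝ → ℝ := Function.invFunOn (stieltjesT μ) (Ioi (suppMax μ))

theorem Rtransform_eq_stieltjesInv (μ : Measure ℝ) (x : ℝ) :
    Rtransform μ x = stieltjesInv μ (-x) - 1 / x := rfl

variable {μ : Measure ℝ} {m : ℝ}

theorem isOpen_stieltjesRange : IsOpen (stieltjesRange μ) :=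
  (isOpen_lt continuous_const continuous_coe_real_ereal).inter
    (isOpen_lt continuous_id continuous_const)

theorem neg_mem_stieltjesRange {t x : ℝ} (ht : -t ∈ stieltjesRange μ) (hx : x ∈ Ioc 0 t) :
    -x ∈ stieltjesRange μ :=
  ⟨ht.1.trans_le (EReal.coe_le_coe_iff.2 (neg_le_neg hx.2)), neg_neg_iff_pos.2 hx.1⟩

variable [IsProbabilityMeasure μ]

theorem mapsTo_stieltjesT (hμ : ∀ᵐ l ∂μ, l ∈ Icc m (suppMax μ)) :
    MapsTo (stieltjesT μ) (Ioi (suppMax μ)) (stieltjesRange μ) := by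
  intro z (hz : suppMax μ < z)
  obtain ⟨z', hz', hz'z⟩ := exists_between hz
  refine ⟨?_, ?_⟩
  · calc sStarE μ ≤ stieltjesT μ z' := biInf_le (fun z => (stieltjesT μ z : EReal)) hz'
      _ < stieltjesT μ z := EReal.coe_lt_coe_iff.2 (stieltjesT_strictMonoOn hμ hz' hz hz'z)
  · have hmz : 0 < z - m := by linarith [le_of_ae_mem_Icc hμ]
    linarith [(stieltjesT_mem_Icc hμ hz).2, inv_pos.2 hmz]

theorem surjOn_stieltjesT (hμ : ∀ᵐ l ∂μ, l ∈ Icc m (suppMax μ)) :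
    SurjOn (stieltjesT μ) (Ioi (suppMax μ)) (stieltjesRange μ) := by
  rintro y ⟨hsy, hy⟩
  obtain ⟨z₁, hz₁, hz₁y⟩ : ∃ z₁, suppMax μ < z₁ ∧ stieltjesT μ z₁ < y := by
    simpa [sStarE, iInf_lt_iff] using hsy
  have hy' : 0 < -y⁻¹ := neg_pos.2 (inv_lt_zero.2 hy)
  have hz₂ : suppMax μ < suppMax μ + 1 - y⁻¹ := by linarith
  have hyz₂ : y < stieltjesT μ (suppMax μ + 1 - y⁻¹) := by
    have h := inv_strictAnti₀ hy' (show -y⁻¹ < suppMax μ + 1 - y⁻¹ - suppMax μ by linarith)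
    rw [inv_neg, inv_inv] at h
    linarith [(stieltjesT_mem_Icc hμ hz₂).1]
  have hz₁₂ : z₁ ≤ suppMax μ + 1 - y⁻¹ :=
    ((stieltjesT_strictMonoOn hμ).le_iff_le hz₁ hz₂).1 (by linarith)
  obtain ⟨z, hz, rfl⟩ := intermediate_value_Icc hz₁₂
    ((stieltjesT_continuousOn (hμ.mono fun _ hl => hl.2)).mono fun _ hw => hz₁.trans_le hw.1)
    ⟨hz₁y.le, hyz₂.le⟩
  exact ⟨z, hz₁.trans_le hz.1, rfl⟩

theorem bijOn_stieltjesT (hμ : ∀ᵐ l ∂μ, l ∈ Icc m (suppMax μ)) :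
    BijOn (stieltjesT μ) (Ioi (suppMax μ)) (stieltjesRange μ) :=
  ⟨mapsTo_stieltjesT hμ, (stieltjesT_strictMonoOn hμ).injOn, surjOn_stieltjesT hμ⟩

theorem invOn_stieltjesInv (hμ : ∀ᵐ l ∂μ, l ∈ Icc m (suppMax μ)) :
    InvOn (stieltjesInv μ) (stieltjesT μ) (Ioi (suppMax μ)) (stieltjesRange μ) :=
  (bijOn_stieltjesT hμ).invOn_invFunOn

theorem bijOn_stieltjesInv (hμ : ∀ᵐ l ∂μ, l ∈ Icc m (suppMax μ)) :
    BijOn (stieltjesInv μ) (stieltjesRange μ) (Ioi (suppMax μ)) :=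
  (bijOn_stieltjesT hμ).symm (invOn_stieltjesInv hμ).symm

theorem stieltjesT_stieltjesInv (hμ : ∀ᵐ l ∂μ, l ∈ Icc m (suppMax μ)) {y : ℝ}
    (hy : y ∈ stieltjesRange μ) : stieltjesT μ (stieltjesInv μ y) = y :=
  (invOn_stieltjesInv hμ).2 hy

theorem stieltjesInv_monotoneOn (hμ : ∀ᵐ l ∂μ, l ∈ Icc m (suppMax μ)) :
    MonotoneOn (stieltjesInv μ) (stieltjesRange μ) := by
  intro y₁ hy₁ y₂ hy₂ h
  rwa [← (stieltjesT_strictMonoOn hμ).le_iff_le ((bijOn_stieltjesInv hμ).mapsTo hy₁)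
    ((bijOn_stieltjesInv hμ).mapsTo hy₂), stieltjesT_stieltjesInv hμ hy₁,
    stieltjesT_stieltjesInv hμ hy₂]

theorem stieltjesInv_continuousOn (hμ : ∀ᵐ l ∂μ, l ∈ Icc m (suppMax μ)) :
    ContinuousOn (stieltjesInv μ) (stieltjesRange μ) := fun y hy =>
  (continuousAt_of_monotoneOn_of_image_mem_nhds (stieltjesInv_monotoneOn hμ)
    (isOpen_stieltjesRange.mem_nhds hy) (by
      rw [(bijOn_stieltjesInv hμ).image_eq]
      exact isOpen_Ioi.mem_nhds ((bijOn_stieltjesInv hμ).mapsTo hy))).continuousWithinAt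

theorem Rtransform_mem_Icc (hμ : ∀ᵐ l ∂μ, l ∈ Icc m (suppMax μ)) {x : ℝ}
    (hx : -x ∈ stieltjesRange μ) : Rtransform μ x ∈ Icc m (suppMax μ) := by
  have hz : suppMax μ < stieltjesInv μ (-x) := (bijOn_stieltjesInv hμ).mapsTo hx
  have hS := stieltjesT_mem_Icc hμ hz
  rw [stieltjesT_stieltjesInv hμ hx, mem_Icc, neg_le_neg_iff, neg_le_neg_iff] at hS
  have hx0 : 0 < x := neg_neg_iff_pos.1 hx.2
  have hmz : 0 < stieltjesInv μ (-x) - m := by linarith [le_of_ae_mem_Icc hμ]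
  rw [Rtransform_eq_stieltjesInv, one_div, mem_Icc]
  constructor
  · linarith [(inv_le_comm₀ hmz hx0).1 hS.2]
  · linarith [(le_inv_comm₀ hx0 (sub_pos.2 hz)).1 hS.1]

end Inverse

/-- Envelope theorem for `F y = min_{w ∈ s} (y w - g w)` with a continuous minimizer `z`:
`F` is squeezed between `F x + (y - x) z y` and `F x + (y - x) z x`. -/
theorem hasDerivAt_mul_sub_of_isMinOn {g z : ℝ → ℝ} {s : Set ℝ} {x : ℝ}
    (hmin : ∀ᶠ y in 𝓝 x, IsMinOn (fun w => y * w - g w) s (z y))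
    (hzs : ∀ᶠ y in 𝓝 x, z y ∈ s) (hz : ContinuousAt z x) :
    HasDerivAt (fun y => y * z y - g (z y)) (z x) x := by
  rw [hasDerivAt_iff_isLittleO, Asymptotics.isLittleO_iff]
  intro ε hε
  filter_upwards [hmin, hzs, hz (Metric.closedBall_mem_nhds _ hε)] with y hy hys hyz
  rw [mem_preimage, Metric.mem_closedBall, Real.dist_eq] at hyz
  have hle := isMinOn_iff.1 hy (z x) hzs.self_of_nhds
  have hge := isMinOn_iff.1 hmin.self_of_nhds (z y) hys
  have hprod : |(y - x) * (z y - z x)| ≤ ε * |y - x| := by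
    rw [abs_mul, mul_comm]
    gcongr
  rw [Real.norm_eq_abs, Real.norm_eq_abs, smul_eq_mul, abs_le]
  constructor <;> nlinarith [abs_le.1 hprod, abs_nonneg (y - x)]

section Primitive

variable {μ : Measure ℝ} [IsProbabilityMeasure μ] {m : ℝ}

theorem isMinOn_stieltjesInv (hμ : ∀ᵐ l ∂μ, l ∈ Icc m (suppMax μ)) {x : ℝ}
    (hx : -x ∈ stieltjesRange μ) :
    IsMinOn (fun w => x * w - ∫ l, Real.log (w - l) ∂μ) (Ioi (suppMax μ))
      (stieltjesInv μ (-x)) := by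
  have hcrit : ∫ l, (stieltjesInv μ (-x) - 1 * l)⁻¹ ∂μ = x := by
    simpa [stieltjesT_eq_neg_integral] using stieltjesT_stieltjesInv hμ hx
  have h := isMinOn_mul_sub_integral_log hμ zero_le_one
    (by simpa using (bijOn_stieltjesInv hμ).mapsTo hx)
  rw [hcrit] at h
  simpa only [one_mul, mul_comm x] using h

def rTransformPrimitive (μ : Measure ℝ) (x : ℝ) : ℝ :=
  x * stieltjesInv μ (-x) - ∫ l, Real.log (stieltjesInv μ (-x) - l) ∂μ - Real.log x - 1

theorem hasDerivAt_rTransformPrimitive (hμ : ∀ᵐ l ∂μ, l ∈ Icc m (suppMax μ)) {x : ℝ}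
    (hx : -x ∈ stieltjesRange μ) : HasDerivAt (rTransformPrimitive μ) (Rtransform μ x) x := by
  have hnhds : ∀ᶠ y in 𝓝 x, -y ∈ stieltjesRange μ :=
    continuous_neg.continuousAt.preimage_mem_nhds (isOpen_stieltjesRange.mem_nhds hx)
  have hlegendre := hasDerivAt_mul_sub_of_isMinOn (g := fun w => ∫ l, Real.log (w - l) ∂μ)
    (hnhds.mono fun y hy => isMinOn_stieltjesInv hμ hy)
    (hnhds.mono fun y hy => (bijOn_stieltjesInv hμ).mapsTo hy)
    (((stieltjesInv_continuousOn hμ).continuousAt (isOpen_stieltjesRange.mem_nhds hx)).comp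
      continuous_neg.continuousAt)
  rw [Rtransform_eq_stieltjesInv, one_div]
  exact (hlegendre.sub (Real.hasDerivAt_log (neg_neg_iff_pos.1 hx.2).ne')).sub_const 1

theorem integral_log_sub_mem_Icc {b w : ℝ} (hμ : ∀ᵐ l ∂μ, l ∈ Icc m b) (hw : b < w) :
    ∫ l, Real.log (w - l) ∂μ ∈ Icc (Real.log (w - b)) (Real.log (w - m)) := by
  have hint := integrable_log_sub hμ hw
  constructor
  · have h := integral_mono_ae (integrable_const (Real.log (w - b))) hint <| by
      filter_upwards [hμ] with l hl
      exact Real.log_le_log (sub_pos.2 hw) (by linarith [hl.2])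
    simpa using h
  · have h := integral_mono_ae hint (integrable_const (Real.log (w - m))) <| by
      filter_upwards [hμ] with l hl
      exact Real.log_le_log (by linarith [hl.2]) (by linarith [hl.1])
    simpa using h

/-- With `r = R_μ(x)` and `z = S_μ⁻¹(-x) = r + 1/x`, the bounds `log (z - λ_max) ≤ ∫ log (z - λ) ≤
log (z - m)` turn into bounds on the primitive that vanish with `x`. -/
theorem rTransformPrimitive_mem_Icc (hμ : ∀ᵐ l ∂μ, l ∈ Icc m (suppMax μ)) {x : ℝ}
    (hx : -x ∈ stieltjesRange μ) (hxc : x * (suppMax μ - m) < 1) :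
    rTransformPrimitive μ x ∈ Icc (x * m - Real.log (1 + x * (suppMax μ - m)))
      (x * suppMax μ - Real.log (1 - x * (suppMax μ - m))) := by
  have hx0 : 0 < x := neg_neg_iff_pos.1 hx.2
  obtain ⟨hrm, hrM⟩ := Rtransform_mem_Icc hμ hx
  rw [Rtransform_eq_stieltjesInv] at hrm hrM
  have hz : suppMax μ < stieltjesInv μ (-x) := (bijOn_stieltjesInv hμ).mapsTo hx
  set z := stieltjesInv μ (-x)
  have hlog : ∀ c < z, Real.log (z - c) = Real.log (1 + x * (z - 1 / x - c)) - Real.log x := by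
    intro c hc
    rw [eq_sub_iff_add_eq, ← Real.log_mul (sub_pos.2 hc).ne' hx0.ne']
    congr 1
    field_simp
    ring
  obtain ⟨hL₁, hL₂⟩ := integral_log_sub_mem_Icc hμ hz
  rw [hlog _ hz] at hL₁
  rw [hlog m (by linarith [le_of_ae_mem_Icc hμ])] at hL₂
  have hxz : x * z = 1 + x * (z - 1 / x) := by field_simp; ring
  have hmono₁ : Real.log (1 + x * (z - 1 / x - m)) ≤ Real.log (1 + x * (suppMax μ - m)) :=
    Real.log_le_log (by nlinarith) (by nlinarith)
  have hmono₂ : Real.log (1 - x * (suppMax μ - m)) ≤ Real.log (1 + x * (z - 1 / x - suppMax μ)) :=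
    Real.log_le_log (by linarith) (by nlinarith)
  simp only [rTransformPrimitive, mem_Icc]
  constructor <;> nlinarith

theorem tendsto_rTransformPrimitive_zero (hμ : ∀ᵐ l ∂μ, l ∈ Icc m (suppMax μ)) {t : ℝ}
    (ht : -t ∈ stieltjesRange μ) : Tendsto (rTransformPrimitive μ) (𝓝[>] 0) (𝓝 0) := by
  set c := suppMax μ - m
  have hlow : Tendsto (fun x => x * m - Real.log (1 + x * c)) (𝓝[>] 0) (𝓝 0) := by
    have h : ContinuousAt (fun x => x * m - Real.log (1 + x * c)) 0 := by fun_prop (disch := simp)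
    simpa using h.tendsto.mono_left nhdsWithin_le_nhds
  have hupp : Tendsto (fun x => x * suppMax μ - Real.log (1 - x * c)) (𝓝[>] 0) (𝓝 0) := by
    have h : ContinuousAt (fun x => x * suppMax μ - Real.log (1 - x * c)) 0 := by
      fun_prop (disch := simp)
    simpa using h.tendsto.mono_left nhdsWithin_le_nhds
  have hsmall : ∀ᶠ x in 𝓝[>] 0, x * c < 1 := nhdsWithin_le_nhds <|
    (continuousAt_id.mul continuousAt_const).eventually_lt continuousAt_const (by simp)
  have hbounds : ∀ᶠ x in 𝓝[>] 0, rTransformPrimitive μ x ∈ Icc (x * m - Real.log (1 + x * c))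
      (x * suppMax μ - Real.log (1 - x * c)) := by
    filter_upwards [Ioc_mem_nhdsGT (neg_neg_iff_pos.1 ht.2), hsmall] with x hx hxc
    exact rTransformPrimitive_mem_Icc hμ (neg_mem_stieltjesRange ht hx) hxc
  exact tendsto_of_tendsto_of_tendsto_of_le_of_le' hlow hupp (hbounds.mono fun _ h => h.1)
    (hbounds.mono fun _ h => h.2)

theorem intervalIntegrable_Rtransform (hμ : ∀ᵐ l ∂μ, l ∈ Icc m (suppMax μ)) {t : ℝ}
    (ht : -t ∈ stieltjesRange μ) : IntervalIntegrable (Rtransform μ) volume 0 t := by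
  have hR : ∀ x ∈ Ioc 0 t, -x ∈ stieltjesRange μ := fun x hx => neg_mem_stieltjesRange ht hx
  have hcont : ContinuousOn (Rtransform μ) (Ioc 0 t) := fun x hx =>
    ((((stieltjesInv_continuousOn hμ).continuousAt
      (isOpen_stieltjesRange.mem_nhds (hR x hx))).comp continuous_neg.continuousAt).sub
      (continuousAt_const.div continuousAt_id hx.1.ne')).continuousWithinAt
  rw [intervalIntegrable_iff_integrableOn_Ioc_of_le (neg_neg_iff_pos.1 ht.2).le]
  refine (integrableOn_const (C := max |m| |suppMax μ|) measure_Ioc_lt_top.ne).mono'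
    (hcont.aestronglyMeasurable measurableSet_Ioc) ?_
  rw [ae_restrict_iff' measurableSet_Ioc]
  exact ae_of_all _ fun x hx =>
    abs_le_max_abs_abs (Rtransform_mem_Icc hμ (hR x hx)).1 (Rtransform_mem_Icc hμ (hR x hx)).2

theorem integral_Rtransform (hμ : ∀ᵐ l ∂μ, l ∈ Icc m (suppMax μ)) {t : ℝ}
    (ht : -t ∈ stieltjesRange μ) :
    ∫ x in (0 : ℝ)..t, Rtransform μ x = rTransformPrimitive μ t := by
  rw [intervalIntegral.integral_eq_sub_of_hasDerivAt_of_tendsto (neg_neg_iff_pos.1 ht.2)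
    (fun x hx => hasDerivAt_rTransformPrimitive hμ
      (neg_mem_stieltjesRange ht (Ioo_subset_Ioc_self hx)))
    (intervalIntegrable_Rtransform hμ ht) (tendsto_rTransformPrimitive_zero hμ ht)
    ((hasDerivAt_rTransformPrimitive hμ ht).continuousAt.tendsto.mono_left nhdsWithin_le_nhds),
    sub_zero]

theorem Rtransform_minimizer_spec (hμ : ∀ᵐ l ∂μ, l ∈ Icc m (suppMax μ)) {β s : ℝ} (hβ : 0 ≤ β)
    (hs : 0 < s) (hcond : ((β * s : ℝ) : EReal) < -(sStarE μ)) :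
    β * suppMax μ < β * Rtransform μ (β * s) + 1 / s ∧
    ∫ l, (β * Rtransform μ (β * s) + 1 / s - β * l)⁻¹ ∂μ = s ∧
    (β * Rtransform μ (β * s) + 1 / s) * s
        - ∫ l, Real.log (β * Rtransform μ (β * s) + 1 / s - β * l) ∂μ
      = 1 + Real.log s + ∫ x in (0 : ℝ)..(β * s), Rtransform μ x := by
  rcases hβ.eq_or_lt with rfl | hβ
  · simp [hs, hs.ne', Real.log_inv]
  have ht : -(β * s) ∈ stieltjesRange μ :=
    ⟨by simpa using EReal.lt_neg_of_lt_neg hcond, neg_neg_iff_pos.2 (by positivity)⟩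
  have hz : suppMax μ < stieltjesInv μ (-(β * s)) := (bijOn_stieltjesInv hμ).mapsTo ht
  have hSz : ∫ l, (stieltjesInv μ (-(β * s)) - l)⁻¹ ∂μ = β * s := by
    simpa [stieltjesT_eq_neg_integral] using stieltjesT_stieltjesInv hμ ht
  set z := stieltjesInv μ (-(β * s))
  have hγ₀ : β * Rtransform μ (β * s) + 1 / s = β * z := by
    rw [Rtransform_eq_stieltjesInv]
    field_simp
    ring
  have hlog : ∫ l, Real.log (β * z - β * l) ∂μ = Real.log β + ∫ l, Real.log (z - l) ∂μ := by
    have h : ∀ᵐ l ∂μ, Real.log (β * z - β * l) = Real.log β + Real.log (z - l) := by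
      filter_upwards [hμ] with l hl
      rw [← mul_sub, Real.log_mul hβ.ne' (by linarith [hl.2])]
    rw [integral_congr_ae h, integral_add (integrable_const _) (integrable_log_sub hμ hz)]
    simp
  rw [hγ₀, integral_Rtransform hμ ht, rTransformPrimitive, Real.log_mul hβ.ne' hs.ne', hlog]
  refine ⟨mul_lt_mul_of_pos_left hz hβ, ?_, by ring⟩
  simp_rw [← mul_sub, mul_inv]
  rw [integral_const_mul, hSz]
  field_simp

end Primitive

/-- Let `μ` be a compactly supported probability measure on `ℝ` with
`λ_max = sup(supp μ)`, and let `σ > 0` and `β ≥ 0` satisfy `βσ² < −s_*`. Then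
`inf_{γ > βλ_max} [ γσ² − ∫ μ(dλ) log(γ − βλ) ] = 1 + log σ² + ∫_0^{βσ²} R_μ(x) dx`,
and the infimum is attained at `γ₀ = β R_μ(βσ²) + 1/σ²` (for `β = 0` the term `β R_μ(0)`
vanishes, so the minimizer is `γ₀ = 1/σ²`, implementing the continuity convention). -/
theorem statement15
    (μ : Measure ℝ) [IsProbabilityMeasure μ]
    (hcomp : ∃ K : Set ℝ, IsCompact K ∧ μ Kᶜ = 0)
    (σ β : ℝ) (hσ : 0 < σ) (hβ : 0 ≤ β)
    (hcond : ((β * σ ^ 2 : ℝ) : EReal) < -(sStarE μ)) :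
    sInf {y : ℝ | ∃ γ : ℝ, β * suppMax μ < γ ∧
        y = γ * σ ^ 2 - ∫ l, Real.log (γ - β * l) ∂μ}
      = (1 + Real.log (σ ^ 2) + ∫ x in (0:ℝ)..(β * σ ^ 2), Rtransform μ x) ∧
    β * suppMax μ < β * Rtransform μ (β * σ ^ 2) + 1 / σ ^ 2 ∧
    ((β * Rtransform μ (β * σ ^ 2) + 1 / σ ^ 2) * σ ^ 2
        - ∫ l, Real.log (β * Rtransform μ (β * σ ^ 2) + 1 / σ ^ 2 - β * l) ∂μ)
      = (1 + Real.log (σ ^ 2) + ∫ x in (0:ℝ)..(β * σ ^ 2), Rtransform μ x) := by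
  obtain ⟨m, hμ⟩ := exists_ae_mem_Icc_suppMax hcomp
  obtain ⟨hγ₀, hcrit, hval⟩ := Rtransform_minimizer_spec hμ hβ (by positivity) hcond
  have hmin := isMinOn_mul_sub_integral_log hμ hβ hγ₀
  rw [hcrit] at hmin
  refine ⟨?_, hγ₀, hval⟩
  rw [← hval]
  refine IsLeast.csInf_eq ⟨⟨_, hγ₀, rfl⟩, ?_⟩
  rintro _ ⟨γ, hγ, rfl⟩
  exact isMinOn_iff.1 hmin γ hγ

end
end

section
/- Let F ∈ ℝ^{M×N}, Δ > 0, Y ∈ ℝ^M. Suppose the real numbers v > 0, γ_0 > 0, γ_J and vectors m, λ_0, λ_J ∈ ℝ^N satisfy the stationary VAMP equations for compressed sensing: γ_0 = 1/v − γ_J, λ_0 = −m/v − λ_J, m = (γ_0 I_N + FᵀF/Δ)^{-1} (FᵀY/Δ − λ_0), v = (1/N) Tr[(γ_0 I_N + FᵀF/Δ)^{-1}], γ_J = 1/v − γ_0, and λ_J = −m/v − λ_0. Then the TAP equations hold: (i) λ_J = −γ_J m − (1/Δ) Fᵀ(Y − F m); and (ii) γ_J = S^{-1}(v) + 1/v,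 where S(z) = (1/N) Σ_{k=1}^N 1/(λ_k − z) is the Stieltjes transform of the empirical spectral distribution of FᵀF/Δ (with eigenvalues λ_1,…,λ_N ≥ 0) and S^{-1} denotes the inverse of the restriction of S to (−∞, min_k λ_k), i.e. S^{-1}(v) = −γ_0. -/
open Matrix

noncomputable section

/-- Suppose `v > 0`, `γ₀ > 0`, `γ_J` and the vectors `m, λ₀, λ_J` satisfy the
stationary VAMP equations for compressed sensing. Then the TAP equations hold:
(i) `λ_J = −γ_J m − (1/Δ) Fᵀ(Y − F m)`; and
(ii) `γ_J = S⁻¹(v) + 1/v`, where `S(z) = (1/N) ∑_k 1/(λ_k − z)` is the Stieltjes transform of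
the empirical spectral distribution of `FᵀF/Δ` (eigenvalues `λ_1,…,λ_N ≥ 0`) and `S⁻¹` is the
inverse of the restriction of `S` to `(−∞, min_k λ_k)`, i.e. `S⁻¹(v) = −γ₀`. -/
theorem statement18
    (M N : ℕ) (hN : 0 < N)
    (F : Matrix (Fin M) (Fin N) ℝ) (Δ : ℝ) (hΔ : 0 < Δ) (Y : Fin M → ℝ)
    (v γ0 γJ : ℝ) (hv : 0 < v) (hγ0 : 0 < γ0)
    (m l0 lJ : Fin N → ℝ)
    (lam : Fin N → ℝ) (hlam : ∀ k, 0 ≤ lam k)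
    (O : Matrix (Fin N) (Fin N) ℝ) (hO : O * Oᵀ = 1)
    (hspec : (1 / Δ) • (Fᵀ * F) = O * Matrix.diagonal lam * Oᵀ)
    (h1 : γ0 = 1 / v - γJ)
    (h2 : l0 = -(1 / v) • m - lJ)
    (h3 : m = (γ0 • (1 : Matrix (Fin N) (Fin N) ℝ) + (1 / Δ) • (Fᵀ * F))⁻¹
        *ᵥ ((1 / Δ) • (Fᵀ *ᵥ Y) - l0))
    (h4 : v = (N : ℝ)⁻¹ *
        Matrix.trace ((γ0 • (1 : Matrix (Fin N) (Fin N) ℝ) + (1 / Δ) • (Fᵀ * F))⁻¹))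
    (h5 : γJ = 1 / v - γ0)
    (h6 : lJ = -(1 / v) • m - l0) :
    (lJ = -γJ • m - (1 / Δ) • (Fᵀ *ᵥ (Y - F *ᵥ m))) ∧
    (-γ0 < ⨅ k, lam k) ∧
    ((N : ℝ)⁻¹ * ∑ k, (lam k - (-γ0))⁻¹ = v) ∧
    (γJ = -γ0 + 1 / v) := by
  have hOT : Oᵀ * O = 1 := mul_eq_one_comm.mp hO
  set A : Matrix (Fin N) (Fin N) ℝ :=
    γ0 • (1 : Matrix (Fin N) (Fin N) ℝ) + (1 / Δ) • (Fᵀ * F) with hAdef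
  have hd : ∀ k, γ0 + lam k ≠ 0 := fun k =>
    ne_of_gt (by have := hlam k; linarith)
  have hA : A = O * Matrix.diagonal (fun k => γ0 + lam k) * Oᵀ := by
    have hdiag : Matrix.diagonal (fun k => γ0 + lam k)
        = γ0 • (1 : Matrix (Fin N) (Fin N) ℝ) + Matrix.diagonal lam := by
      ext i j
      by_cases h : i = j <;>
        simp [Matrix.diagonal_apply, h, Matrix.one_apply]
    rw [hdiag, Matrix.mul_add, Matrix.add_mul, Matrix.mul_smul, Matrix.mul_one,
      Matrix.smul_mul, hO, hAdef, hspec]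
  set B : Matrix (Fin N) (Fin N) ℝ :=
    O * Matrix.diagonal (fun k => (γ0 + lam k)⁻¹) * Oᵀ with hBdef
  have hAB : A * B = 1 := by
    rw [hA, hBdef]
    calc O * Matrix.diagonal (fun k => γ0 + lam k) * Oᵀ *
          (O * Matrix.diagonal (fun k => (γ0 + lam k)⁻¹) * Oᵀ)
        = O * (Matrix.diagonal (fun k => γ0 + lam k) * ((Oᵀ * O) *
            Matrix.diagonal (fun k => (γ0 + lam k)⁻¹))) * Oᵀ := by
          simp only [Matrix.mul_assoc]
      _ = 1 := by
          rw [hOT, Matrix.one_mul, Matrix.diagonal_mul_diagonal]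
          have : (fun k => (γ0 + lam k) * (γ0 + lam k)⁻¹) = fun _ => (1 : ℝ) := by
            funext k; exact mul_inv_cancel₀ (hd k)
          rw [this, Matrix.diagonal_one, Matrix.mul_one, hO]
  have hAinv : A⁻¹ = B := Matrix.inv_eq_right_inv hAB
  have hAA : A * A⁻¹ = 1 := by rw [hAinv]; exact hAB
  -- trace computation
  have htr : Matrix.trace A⁻¹ = ∑ k, (γ0 + lam k)⁻¹ := by
    rw [hAinv, hBdef, Matrix.trace_mul_cycle, hOT, Matrix.one_mul,
      Matrix.trace_diagonal]
  have hv4 : v = (N : ℝ)⁻¹ * ∑ k, (γ0 + lam k)⁻¹ := by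
    rw [h4, htr]
  refine ⟨?_, ?_, ?_, by linarith⟩
  · -- TAP equation (i)
    have hAm : A *ᵥ m = (1 / Δ) • (Fᵀ *ᵥ Y) - l0 := by
      conv_lhs => rw [h3, Matrix.mulVec_mulVec, hAA, Matrix.one_mulVec]
    have hl0 : l0 = (1 / Δ) • (Fᵀ *ᵥ Y) - A *ᵥ m := by
      rw [hAm]; abel
    rw [h6, hl0, hAdef]
    funext i
    have hγ : -(1 / v) + γ0 = -γJ := by linarith
    simp [Matrix.add_mulVec, Matrix.smul_mulVec, Matrix.one_mulVec,
      Matrix.mulVec_sub, ← Matrix.mulVec_mulVec, Pi.smul_apply, Pi.sub_apply,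
      Pi.add_apply, smul_eq_mul]
    linear_combination m i * hγ
  · -- lower bound on infimum
    haveI : Nonempty (Fin N) := ⟨⟨0, hN⟩⟩
    obtain ⟨k, hk⟩ := Finite.exists_min lam
    have h1 : (⨅ j, lam j) = lam k := le_antisymm (ciInf_le (Finite.bddBelow_range lam) k)
      (le_ciInf hk)
    rw [h1]
    have := hlam k; linarith
  · -- sum formula
    rw [hv4]
    congr 1
    refine Finset.sum_congr rfl fun k _ => ?_
    rw [sub_neg_eq_add, add_comm]

end
end
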